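/- arXiv:2411.10549 — 2 statements merged into one kernel-verified Lean document; each statement's English description precedes it below -/
import Mathlib

section
/- Let a : ℕ → ℝ be a strictly increasing function, let A = range(a) ⊆ ℝ, and let t, k be natural numbers with k ≥ 3. Suppose that (a(i+3) − a(i+2))/(a(i+2) − a(i+1)) < (a(i+2) − a(i+1))/(a(i+1) − a(i)) for each i ∈ {t, t+1, …, t+k−3}. Then there exists a finite set X ⊆ A × A with exactly k+1 elements such that every point of X is an extreme point of conv(X) and conv(X) ∩ (A × A) = X. -/
/-!
Write `b l = a (t + l)` and `n = k - 1`. The points `P l = (b l, b (l + 1))`, `l ≤ n`, form a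
chain whose `l`-th edge has slope `(b (l + 2) - b (l + 1)) / (b (l + 1) - b l)`, so the hypothesis
says that the chain is strictly concave. Hence every `P i` is the unique maximiser over
`X = {(b 0, b 0), P 0, …, P n}` of a form `y - c x`, and `(b 0, b 0)`, the only point of `X` on
the diagonal, is the unique maximiser of `x - y`. A point `(b i, b j)` of the hull has `i ≤ n` and
lies below the line of the `i`-th edge (or below `y = b (n + 1)`), so `j ≤ i + 1`; if `j ≤ i` it
is on the diagonal side, hence equal to `(b 0, b 0)`, and otherwise it is `P i`.
-/

open Set

section HalfSpace

variable {𝕜 E : Type*} [Field 𝕜] [LinearOrder 𝕜] [IsStrictOrderedRing 𝕜]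
  [AddCommGroup E] [Module 𝕜 E] (f : E →ₗ[𝕜] 𝕜) {s : Set E} {x : E}

theorem convex_insert_setOf_lt (x : E) : Convex 𝕜 (insert x {y | f y < f x}) := by
  refine convex_iff_openSegment_subset.2 fun y hy z hz p ⟨u, v, hu, hv, huv, hp⟩ => ?_
  obtain rfl : u = 1 - v := by linarith
  have hfp : f p = (1 - v) * f y + v * f z := by simp [← hp]
  change y = x ∨ f y < f x at hy
  change z = x ∨ f z < f x at hz
  change p = x ∨ f p < f x
  rcases hy with rfl | hy <;> rcases hz with rfl | hz
  · exact .inl (hp ▸ Convex.combo_self huv _)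
  · exact .inr (by nlinarith [mul_lt_mul_of_pos_left hz hv])
  · exact .inr (by nlinarith [mul_lt_mul_of_pos_left hy hu])
  · exact .inr (by nlinarith [mul_lt_mul_of_pos_left hy hu, mul_lt_mul_of_pos_left hz hv])

theorem convexHull_subset_insert_setOf_lt (hs : ∀ y ∈ s, y ≠ x → f y < f x) :
    convexHull 𝕜 s ⊆ insert x {y | f y < f x} :=
  convexHull_min (fun y hy => (eq_or_ne y x).imp id (hs y hy)) (convex_insert_setOf_lt f x)

theorem eq_of_mem_convexHull_of_le (hs : ∀ y ∈ s, y ≠ x → f y < f x) {q : E}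
    (hq : q ∈ convexHull 𝕜 s) (hxq : f x ≤ f q) : q = x :=
  (convexHull_subset_insert_setOf_lt f hs hq).resolve_right hxq.not_gt

theorem mem_extremePoints_convexHull_of_forall_lt (hx : x ∈ s)
    (hs : ∀ y ∈ s, y ≠ x → f y < f x) : x ∈ (convexHull 𝕜 s).extremePoints 𝕜 := by
  rw [(convex_convexHull 𝕜 s).mem_extremePoints_iff_mem_sdiff_convexHull_sdiff]
  refine ⟨subset_convexHull 𝕜 s hx, fun hx' => lt_irrefl (f x) ?_⟩
  refine convexHull_min (fun y hy => ?_) (convex_halfSpace_lt f.isLinear (f x)) hx'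
  exact (convexHull_subset_insert_setOf_lt f hs hy.1).resolve_left hy.2

end HalfSpace

theorem Monotone.range_inter_Ici_subset {α : Type*} [PartialOrder α] {a : ℕ → α}
    (ha : Monotone a) (t : ℕ) :
    range a ∩ Ici (a t) ⊆ range fun l => a (t + l) := by
  rintro _ ⟨⟨i, rfl⟩, hi⟩
  rcases le_total t i with h | h
  · exact ⟨i - t, by simp only [Nat.add_sub_cancel' h]⟩
  · exact ⟨0, by simpa using le_antisymm hi (ha h)⟩

theorem StrictAntiOn.exists_separating {𝕜 : Type*} [Field 𝕜] [LinearOrder 𝕜]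
    [IsStrictOrderedRing 𝕜] {s : ℕ → 𝕜} {n i : ℕ} (hs : StrictAntiOn s (Iio n))
    (hi : i ≤ n) :
    ∃ c, (∀ l < i, c < s l) ∧ ∀ l, i ≤ l → l < n → s l < c := by
  rcases i.eq_zero_or_pos with rfl | hi0
  · refine ⟨s 0 + 1, fun l hl => absurd hl l.not_lt_zero, fun l _ hl => ?_⟩
    linarith [hs.antitoneOn (l.zero_le.trans_lt hl) hl l.zero_le]
  obtain ⟨j, rfl⟩ : ∃ j, i = j + 1 := ⟨i - 1, by omega⟩
  have hleft : ∀ c < s j, ∀ l < j + 1, c < s l := fun c hc l hl =>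
    hc.trans_le (hs.antitoneOn (hl.trans_le hi) hi (Nat.lt_succ_iff.1 hl))
  rcases hi.lt_or_eq with hi | rfl
  · have hdrop : s (j + 1) < s j := hs (j.lt_succ_self.trans hi) hi j.lt_succ_self
    refine ⟨(s j + s (j + 1)) / 2, hleft _ (by linarith), fun l hl hln => ?_⟩
    linarith [hs.antitoneOn hi hln hl]
  · exact ⟨s j - 1, hleft _ (by linarith), fun l hl hln => absurd hl (not_le.2 hln)⟩

section Chain

variable {b : ℕ → ℝ} {n : ℕ}

noncomputable def gapRatio (b : ℕ → ℝ) (i : ℕ) : ℝ :=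
  (b (i + 2) - b (i + 1)) / (b (i + 1) - b i)

def chainPoint (b : ℕ → ℝ) (l : ℕ) : ℝ × ℝ := (b l, b (l + 1))

noncomputable def chainPolygon (b : ℕ → ℝ) (n : ℕ) : Finset (ℝ × ℝ) :=
  insert (b 0, b 0) ((Finset.range (n + 1)).image (chainPoint b))

def slopeForm (c : ℝ) : ℝ × ℝ →ₗ[ℝ] ℝ :=
  LinearMap.snd ℝ ℝ ℝ - c • LinearMap.fst ℝ ℝ ℝ

@[simp]
theorem slopeForm_apply (c : ℝ) (p : ℝ × ℝ) : slopeForm c p = p.2 - c * p.1 := rfl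

theorem mem_chainPolygon {p : ℝ × ℝ} :
    p ∈ chainPolygon b n ↔ p = (b 0, b 0) ∨ ∃ l ≤ n, chainPoint b l = p := by
  simp [chainPolygon]

theorem card_chainPolygon (hb : StrictMono b) (n : ℕ) : (chainPolygon b n).card = n + 2 := by
  rw [chainPolygon, Finset.card_insert_of_notMem, Finset.card_image_of_injective _ ?inj,
    Finset.card_range]
  · exact fun i j hij => hb.injective (congrArg Prod.fst hij :)
  · simp only [Finset.mem_image, not_exists, not_and]
    intro l _ hl
    exact (hb (Nat.succ_pos l)).ne' (congrArg Prod.snd hl)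

theorem coe_chainPolygon_subset_range_prod (b : ℕ → ℝ) (n : ℕ) :
    ↑(chainPolygon b n) ⊆ range b ×ˢ range b := by
  intro p hp
  rcases mem_chainPolygon.1 hp with rfl | ⟨l, -, rfl⟩
  exacts [⟨⟨0, rfl⟩, ⟨0, rfl⟩⟩, ⟨⟨l, rfl⟩, ⟨l + 1, rfl⟩⟩]

theorem convexHull_chainPolygon_subset (hb : Monotone b) (n : ℕ) :
    convexHull ℝ ↑(chainPolygon b n) ⊆ Icc (b 0) (b n) ×ˢ Icc (b 0) (b (n + 1)) := by
  refine convexHull_min (fun p hp => ?_) ((convex_Icc _ _).prod (convex_Icc _ _))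
  rcases mem_chainPolygon.1 hp with rfl | ⟨l, hl, rfl⟩
  · exact ⟨⟨le_rfl, hb (Nat.zero_le n)⟩, le_rfl, hb (Nat.zero_le _)⟩
  · exact ⟨⟨hb (Nat.zero_le l), hb hl⟩, hb (Nat.zero_le _), hb (Nat.succ_le_succ hl)⟩

theorem slopeForm_chainPoint_succ_sub (hb : StrictMono b) (c : ℝ) (l : ℕ) :
    slopeForm c (chainPoint b (l + 1)) - slopeForm c (chainPoint b l) =
      (gapRatio b l - c) * (b (l + 1) - b l) := by
  have : b (l + 1) - b l ≠ 0 := (sub_pos.2 (hb (Nat.lt_succ_self l))).ne'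
  simp only [slopeForm_apply, chainPoint, gapRatio]
  field_simp
  ring

theorem slopeForm_diag_lt_chainPoint_zero (hb : StrictMono b) (c : ℝ) :
    slopeForm c (b 0, b 0) < slopeForm c (chainPoint b 0) := by
  simpa [chainPoint] using hb Nat.zero_lt_one

theorem slopeForm_chainPoint_lt (hb : StrictMono b) {c : ℝ} {i l : ℕ}
    (hleft : ∀ m < i, c < gapRatio b m) (hright : ∀ m, i ≤ m → m < n → gapRatio b m < c)
    (hl : l ≤ n) (hli : l ≠ i) :
    slopeForm c (chainPoint b l) < slopeForm c (chainPoint b i) := by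
  set φ := fun m => slopeForm c (chainPoint b m)
  have step := slopeForm_chainPoint_succ_sub hb c
  have gap : ∀ m, 0 < b (m + 1) - b m := fun m => sub_pos.2 (hb m.lt_succ_self)
  rcases hli.lt_or_gt with h | h
  · refine strictMonoOn_of_lt_add_one (f := φ) ordConnected_Iic (fun m _ _ hm => ?_)
      h.le self_mem_Iic h
    linarith [step m, mul_pos (sub_pos.2 (hleft m hm)) (gap m)]
  · refine strictAntiOn_of_add_one_lt (f := φ) ordConnected_Icc (fun m _ hm hm' => ?_)
      (left_mem_Icc.2 (h.le.trans hl)) ⟨h.le, hl⟩ h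
    linarith [step m, mul_neg_of_neg_of_pos (sub_neg.2 (hright m hm.1 hm'.2)) (gap m)]

theorem slopeForm_chainPoint_le (hb : StrictMono b) (hs : StrictAntiOn (gapRatio b) (Iio n))
    {j l : ℕ} (hj : j < n) (hl : l ≤ n) :
    slopeForm (gapRatio b j) (chainPoint b l) ≤ slopeForm (gapRatio b j) (chainPoint b j) := by
  set φ := fun m => slopeForm (gapRatio b j) (chainPoint b m)
  have step := slopeForm_chainPoint_succ_sub hb (gapRatio b j)
  have gap : ∀ m, 0 < b (m + 1) - b m := fun m => sub_pos.2 (hb m.lt_succ_self)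
  rcases le_total l j with h | h
  · refine monotoneOn_of_le_add_one (f := φ) ordConnected_Iic (fun m _ _ hm => ?_)
      h self_mem_Iic h
    have : gapRatio b j < gapRatio b m := hs ((m.lt_succ_self.trans_le hm).trans hj) hj hm
    linarith [step m, mul_pos (sub_pos.2 this) (gap m)]
  · refine antitoneOn_of_add_one_le (f := φ) ordConnected_Icc (fun m _ hm hm' => ?_)
      (left_mem_Icc.2 hj.le) ⟨h, hl⟩ h
    have : gapRatio b m ≤ gapRatio b j := hs.antitoneOn hj hm'.2 hm.1
    linarith [step m, mul_nonpos_of_nonpos_of_nonneg (sub_nonpos.2 this) (gap m).le]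

theorem slopeForm_lt_of_mem_chainPolygon (hb : StrictMono b) {c : ℝ} {i : ℕ}
    (hleft : ∀ m < i, c < gapRatio b m) (hright : ∀ m, i ≤ m → m < n → gapRatio b m < c)
    (hi : i ≤ n) {p : ℝ × ℝ} (hp : p ∈ chainPolygon b n) (hpi : p ≠ chainPoint b i) :
    slopeForm c p < slopeForm c (chainPoint b i) := by
  rcases mem_chainPolygon.1 hp with rfl | ⟨l, hl, rfl⟩
  · refine (slopeForm_diag_lt_chainPoint_zero hb c).trans_le ?_
    rcases i.eq_zero_or_pos with rfl | hi0
    · exact le_rfl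
    · exact (slopeForm_chainPoint_lt hb hleft hright (Nat.zero_le n) hi0.ne).le
  · exact slopeForm_chainPoint_lt hb hleft hright hl fun h => hpi (h ▸ rfl)

theorem slopeForm_le_of_mem_convexHull_chainPolygon (hb : StrictMono b)
    (hs : StrictAntiOn (gapRatio b) (Iio n)) {j : ℕ} (hj : j < n) {q : ℝ × ℝ}
    (hq : q ∈ convexHull ℝ ↑(chainPolygon b n)) :
    slopeForm (gapRatio b j) q ≤ slopeForm (gapRatio b j) (chainPoint b j) := by
  refine convexHull_min (fun p hp => ?_) (convex_halfSpace_le (slopeForm _).isLinear _) hq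
  rcases mem_chainPolygon.1 hp with rfl | ⟨l, hl, rfl⟩
  · exact ((slopeForm_diag_lt_chainPoint_zero hb _).trans_le
      (slopeForm_chainPoint_le hb hs hj (Nat.zero_le n))).le
  · exact slopeForm_chainPoint_le hb hs hj hl

theorem neg_slopeForm_one_lt_of_mem_chainPolygon (hb : StrictMono b) {p : ℝ × ℝ}
    (hp : p ∈ chainPolygon b n) (hpB : p ≠ (b 0, b 0)) :
    (-slopeForm 1) p < (-slopeForm 1) (b 0, b 0) := by
  obtain ⟨l, -, rfl⟩ := (mem_chainPolygon.1 hp).resolve_left hpB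
  simpa [chainPoint] using hb l.lt_succ_self

theorem mem_extremePoints_convexHull_chainPolygon (hb : StrictMono b)
    (hs : StrictAntiOn (gapRatio b) (Iio n)) {x : ℝ × ℝ} (hx : x ∈ chainPolygon b n) :
    x ∈ (convexHull ℝ ↑(chainPolygon b n)).extremePoints ℝ := by
  rcases mem_chainPolygon.1 hx with rfl | ⟨i, hi, rfl⟩
  · exact mem_extremePoints_convexHull_of_forall_lt (-slopeForm 1) hx
      fun p hp hpB => neg_slopeForm_one_lt_of_mem_chainPolygon hb hp hpB
  · obtain ⟨c, hleft, hright⟩ := hs.exists_separating hi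
    exact mem_extremePoints_convexHull_of_forall_lt (slopeForm c) hx
      fun p hp hpi => slopeForm_lt_of_mem_chainPolygon hb hleft hright hi hp hpi

theorem convexHull_chainPolygon_inter_prod (hb : StrictMono b)
    (hs : StrictAntiOn (gapRatio b) (Iio n)) {A : Set ℝ} (hbA : range b ⊆ A)
    (hA : A ∩ Ici (b 0) ⊆ range b) :
    convexHull ℝ ↑(chainPolygon b n) ∩ A ×ˢ A = chainPolygon b n := by
  refine Subset.antisymm ?_ (subset_inter (subset_convexHull ℝ _)
    ((coe_chainPolygon_subset_range_prod b n).trans (prod_mono hbA hbA)))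
  rintro ⟨x, y⟩ ⟨hq, hxA, hyA⟩
  obtain ⟨⟨hx0, hxn⟩, hy0, hyn⟩ := convexHull_chainPolygon_subset hb.monotone n hq
  obtain ⟨i, rfl⟩ := hA ⟨hxA, hx0⟩
  obtain ⟨j, rfl⟩ := hA ⟨hyA, hy0⟩
  have hin : i ≤ n := hb.le_iff_le.1 hxn
  have hj : j ≤ i + 1 := by
    rcases hin.lt_or_eq with hin | rfl
    · simpa [chainPoint, hb.le_iff_le] using
        slopeForm_le_of_mem_convexHull_chainPolygon hb hs hin hq
    · exact hb.le_iff_le.1 hyn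
  rcases le_or_gt j i with hji | hij
  · rw [eq_of_mem_convexHull_of_le (-slopeForm 1)
      (fun p hp hpB => neg_slopeForm_one_lt_of_mem_chainPolygon hb hp hpB) hq
      (by simpa using hb.monotone hji)]
    exact mem_chainPolygon.2 (.inl rfl)
  · obtain rfl : j = i + 1 := by omega
    exact mem_chainPolygon.2 (.inr ⟨i, hin, rfl⟩)

end Chain

/-- Lemma 1 of the paper: if the ratios of consecutive gaps of a strictly increasing
sequence are decreasing along `k` consecutive indices, then `A × A` contains an
empty polygon with `k + 1` vertices. -/
theorem empty_polygon_of_decreasing_gap_ratios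
    (a : ℕ → ℝ) (ha : StrictMono a) (t k : ℕ) (hk : 3 ≤ k)
    (hratio : ∀ i : ℕ, t ≤ i → i ≤ t + k - 3 →
      (a (i + 3) - a (i + 2)) / (a (i + 2) - a (i + 1)) <
        (a (i + 2) - a (i + 1)) / (a (i + 1) - a i)) :
    ∃ X : Finset (ℝ × ℝ), X.card = k + 1 ∧
      (X : Set (ℝ × ℝ)) ⊆ (Set.range a) ×ˢ (Set.range a) ∧
      (∀ x ∈ X, x ∈ (convexHull ℝ (X : Set (ℝ × ℝ))).extremePoints ℝ) ∧
      convexHull ℝ (X : Set (ℝ × ℝ)) ∩ (Set.range a) ×ˢ (Set.range a)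
        = (X : Set (ℝ × ℝ)) := by
  set b : ℕ → ℝ := fun l => a (t + l)
  have hb : StrictMono b := fun i j hij => ha (Nat.add_lt_add_left hij t)
  have hs : StrictAntiOn (gapRatio b) (Iio (k - 1)) := by
    refine strictAntiOn_of_add_one_lt ordConnected_Iio fun m _ _ hm => ?_
    rw [mem_Iio] at hm
    simpa only [gapRatio, b, add_assoc] using hratio (t + m) (Nat.le_add_right t m) (by omega)
  have hbA : range b ⊆ range a := range_comp_subset_range _ a
  have hA : range a ∩ Ici (b 0) ⊆ range b := by
    simpa [b] using ha.monotone.range_inter_Ici_subset t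
  exact ⟨chainPolygon b (k - 1), by rw [card_chainPolygon hb]; omega,
    (coe_chainPolygon_subset_range_prod b _).trans (prod_mono hbA hbA),
    fun x hx => mem_extremePoints_convexHull_chainPolygon hb hs hx,
    convexHull_chainPolygon_inter_prod hb hs hbA hA⟩
end

section
/- Suppose the two-dimensional flatness constant is 3; that is, for every convex body K in ℝ² whose interior contains no point of ℤ², there is a nonzero vector v ∈ ℤ² such that at most 3 lattice lines of ℤ² orthogonal to v intersect K. Then every empty polygon in S = ℤ² ∖ ℙ², where ℙ² = {(p,q) : p and q are prime}, has at most 24 vertices; that is, every finite set X ⊆ S such that every point of X is an extreme point of conv(X) and conv(X) ∩ S = X satisfies |X| ≤ 24. -/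
/-- An integer `m` is "a prime" when it equals some prime natural number. -/
def IsPrimeInt (m : ℤ) : Prop := ∃ p : ℕ, p.Prime ∧ m = (p : ℤ)

/-- The set of lattice lines of ℤ² orthogonal to `v` that intersect `K`, identified by
the (integer) value of the inner product with `v` along each such line. -/
def latticeLinesMeeting (v : ℤ × ℤ) (K : Set (ℝ × ℝ)) : Set ℤ :=
  {c : ℤ | (∃ z : ℤ × ℤ, z.1 * v.1 + z.2 * v.2 = c) ∧
    ∃ x ∈ K, x.1 * (v.1 : ℝ) + x.2 * (v.2 : ℝ) = (c : ℝ)}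

lemma IsPrimeInt.two_le' {m : ℤ} (h : IsPrimeInt m) : 2 ≤ m := by
  obtain ⟨p, hp, rfl⟩ := h; exact_mod_cast hp.two_le

lemma IsPrimeInt.eq_two_of_not_odd {m : ℤ} (h : IsPrimeInt m) (he : ¬ Odd m) : m = 2 := by
  obtain ⟨p, hp, rfl⟩ := h
  rcases hp.eq_two_or_odd' with rfl | hodd
  · rfl
  · exact absurd (by exact_mod_cast hodd.natCast (R := ℤ)) he

lemma IsPrimeInt.three_le_of_odd {m : ℤ} (h : IsPrimeInt m) (ho : Odd m) : 3 ≤ m := by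
  have h2 := h.two_le'
  have : m ≠ 2 := by rintro rfl; exact (by decide : ¬ Odd (2:ℤ)) ho
  omega

lemma three_distinct {α : Type*} [DecidableEq α] {T : Finset α} (h : 3 ≤ T.card) :
    ∃ x ∈ T, ∃ y ∈ T, ∃ z ∈ T, x ≠ y ∧ x ≠ z ∧ y ≠ z := by
  obtain ⟨x, hx⟩ := Finset.card_pos.mp (lt_of_lt_of_le (by norm_num) h)
  have h2 : 1 < (T.erase x).card := by
    have := Finset.card_erase_of_mem hx; omega
  obtain ⟨y, hy, z, hz, hyz⟩ := Finset.one_lt_card.mp h2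
  exact ⟨x, hx, y, Finset.mem_of_mem_erase hy, z, Finset.mem_of_mem_erase hz,
    (Finset.ne_of_mem_erase hy).symm, (Finset.ne_of_mem_erase hz).symm, hyz⟩

lemma solve_line {v1 v2 a b : ℝ} (hv : ¬(v1 = 0 ∧ v2 = 0)) (h : a * v1 + b * v2 = 0) :
    ∃ t : ℝ, (a, b) = t • ((-v2, v1) : ℝ × ℝ) := by
  by_cases h1 : v1 = 0
  · have h2 : v2 ≠ 0 := fun h2 => hv ⟨h1, h2⟩
    refine ⟨-a / v2, ?_⟩
    have hb : b = 0 := by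
      have : b * v2 = 0 := by rw [h1] at h; linarith
      exact (mul_eq_zero.mp this).resolve_right h2
    subst h1 hb
    simp [Prod.ext_iff]
    field_simp
  · refine ⟨b / v1, ?_⟩
    simp only [Prod.smul_mk, smul_eq_mul, Prod.ext_iff]
    constructor
    · field_simp; nlinarith [h]
    · field_simp

lemma collinear_of_line {v1 v2 c : ℝ} (hv : ¬(v1 = 0 ∧ v2 = 0)) {x y z : ℝ × ℝ}
    (hx : x.1 * v1 + x.2 * v2 = c) (hy : y.1 * v1 + y.2 * v2 = c)
    (hz : z.1 * v1 + z.2 * v2 = c) : Collinear ℝ ({x, y, z} : Set (ℝ × ℝ)) := by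
  rw [collinear_iff_of_mem (Set.mem_insert x _)]
  refine ⟨(-v2, v1), ?_⟩
  intro p hp
  have key : ∀ q : ℝ × ℝ, q.1 * v1 + q.2 * v2 = c → ∃ t : ℝ, q = t • ((-v2, v1) : ℝ × ℝ) +ᵥ x := by
    intro q hq
    obtain ⟨t, ht⟩ := solve_line hv (a := q.1 - x.1) (b := q.2 - x.2) (by ring_nf; linarith)
    refine ⟨t, ?_⟩
    have h1 : q.1 - x.1 = t * (-v2) := congrArg Prod.fst ht
    have h2 : q.2 - x.2 = t * v1 := congrArg Prod.snd ht
    have h3 : (t • ((-v2, v1) : ℝ × ℝ) +ᵥ x) = (t * (-v2) + x.1, t * v1 + x.2) := rfl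
    rw [h3]; ext <;> simp <;> linarith
  rcases hp with rfl | rfl | rfl
  · exact key _ hx
  · exact key _ hy
  · exact key _ hz

lemma shift_mem {A : Set (ℝ × ℝ)} {x : ℝ × ℝ} (hx : x ∈ interior A) :
    ∃ ε : ℝ, 0 < ε ∧ x + (ε, 0) ∈ A ∧ x - (ε, 0) ∈ A := by
  obtain ⟨ε, hε, hball⟩ := Metric.mem_nhds_iff.mp (mem_interior_iff_mem_nhds.mp hx)
  have hnd : ‖((ε / 2, 0) : ℝ × ℝ)‖ = ε / 2 := by
    rw [Prod.norm_def]
    simp [abs_of_pos hε]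
    positivity
  refine ⟨ε / 2, half_pos hε, hball ?_, hball ?_⟩ <;>
    · rw [Metric.mem_ball, dist_eq_norm]
      simp only [add_sub_cancel_left, sub_sub_cancel_left, norm_neg]
      rw [hnd]; linarith

lemma extreme_not_interior {A : Set (ℝ × ℝ)} {x : ℝ × ℝ}
    (hx : x ∈ A.extremePoints ℝ) (hi : x ∈ interior A) : False := by
  obtain ⟨ε, hε, h1, h2⟩ := shift_mem hi
  have hseg : x ∈ openSegment ℝ (x + (ε, 0)) (x - (ε, 0)) := by
    refine ⟨1/2, 1/2, by norm_num, by norm_num, by norm_num, ?_⟩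
    ext <;> simp <;> ring
  obtain ⟨-, hEP⟩ := mem_extremePoints.mp hx
  have h3 : x + (ε, 0) = x := (hEP _ h1 _ h2 hseg).1
  have h4 : x.1 + ε = x.1 := congrArg Prod.fst h3
  linarith

lemma triangle_interior_nonempty {x y z : ℝ × ℝ} (h : ¬ Collinear ℝ ({x, y, z} : Set (ℝ × ℝ))) :
    (interior (convexHull ℝ ({x, y, z} : Set (ℝ × ℝ)))).Nonempty := by
  rw [(convex_convexHull ℝ _).interior_nonempty_iff_affineSpan_eq_top, affineSpan_convexHull]
  have hai : AffineIndependent ℝ ![x, y, z] := affineIndependent_iff_not_collinear_set.mpr h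
  have h2 := hai.affineSpan_eq_top_iff_card_eq_finrank_add_one (V := ℝ × ℝ)
  have hr : Set.range ![x, y, z] = {x, y, z} := by
    ext p
    simp [Matrix.range_cons, Matrix.range_empty]
    tauto
  rw [hr] at h2
  rw [h2]
  simp [Module.finrank_prod]

lemma sort3 (a b c : ℝ) : ∃ r1 r2 r3 : ℝ, r1 ≤ r2 ∧ r2 ≤ r3 ∧
    ∀ x : ℝ, (x = a ∨ x = b ∨ x = c) → (x = r1 ∨ x = r2 ∨ x = r3) := by
  rcases le_total a b with h1 | h1 <;> rcases le_total b c with h2 | h2 <;>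
    rcases le_total a c with h3 | h3
  · exact ⟨a, b, c, by linarith, by linarith, fun x h => by tauto⟩
  · exact ⟨a, b, c, by linarith, by linarith, fun x h => by tauto⟩
  · exact ⟨a, c, b, by linarith, by linarith, fun x h => by tauto⟩
  · exact ⟨c, a, b, by linarith, by linarith, fun x h => by tauto⟩
  · exact ⟨b, a, c, by linarith, by linarith, fun x h => by tauto⟩
  · exact ⟨b, c, a, by linarith, by linarith, fun x h => by tauto⟩
  · exact ⟨b, c, a, by linarith, by linarith, fun x h => by tauto⟩
  · exact ⟨c, b, a, by linarith, by linarith, fun x h => by tauto⟩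

/-- Assuming the two-dimensional flatness theorem with constant 3, every empty polygon
in `ℤ² ∖ ℙ²` has at most 24 vertices. -/
theorem int_minus_prime_grid_empty_polygon_le_24
    (flatness : ∀ K : Set (ℝ × ℝ), Convex ℝ K → IsCompact K →
      (interior K).Nonempty →
      (∀ z : ℤ × ℤ, (((z.1 : ℝ), (z.2 : ℝ)) : ℝ × ℝ) ∉ interior K) →
      ∃ v : ℤ × ℤ, v ≠ 0 ∧ (latticeLinesMeeting v K).ncard ≤ 3)
    (S : Set (ℝ × ℝ))
    (hS : S = {x : ℝ × ℝ | ∃ m n : ℤ,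
      x = (((m : ℝ), (n : ℝ)) : ℝ × ℝ) ∧ ¬ (IsPrimeInt m ∧ IsPrimeInt n)})
    (X : Finset (ℝ × ℝ)) (hXS : (X : Set (ℝ × ℝ)) ⊆ S)
    (hvert : ∀ x ∈ X, x ∈ (convexHull ℝ (X : Set (ℝ × ℝ))).extremePoints ℝ)
    (hempty : convexHull ℝ (X : Set (ℝ × ℝ)) ∩ S = (X : Set (ℝ × ℝ))) :
    X.card ≤ 24 := by
  classical
  set K : Set (ℝ × ℝ) := convexHull ℝ (X : Set (ℝ × ℝ)) with hKdef
  have hKconv : Convex ℝ K := convex_convexHull ℝ _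
  have hKcomp : IsCompact K := X.finite_toSet.isCompact_convexHull (𝕜 := ℝ)
  have hXK : ∀ x ∈ X, x ∈ K := fun x hx => subset_convexHull ℝ _ hx
  -- no three collinear points of X
  have no_three : ∀ x ∈ X, ∀ y ∈ X, ∀ z ∈ X, x ≠ y → x ≠ z → y ≠ z →
      ¬ Collinear ℝ ({x, y, z} : Set (ℝ × ℝ)) := by
    intro x hx y hy z hz hxy hxz hyz hcol
    have But : ∀ a b c : ℝ × ℝ, a ∈ X → b ∈ X → c ∈ X → a ≠ b → b ≠ c →
        Wbtw ℝ a b c → False := by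
      intro a b c ha hb hc hab hbc hw
      have hseg : b ∈ openSegment ℝ a c :=
        mem_openSegment_of_ne_left_right hab (Ne.symm hbc) hw.mem_segment
      obtain ⟨-, hEP⟩ := mem_extremePoints.mp (hvert b hb)
      exact hab ((hEP a (hXK a ha) c (hXK c hc) hseg).1)
    rcases hcol.wbtw_or_wbtw_or_wbtw with h | h | h
    · exact But x y z hx hy hz hxy hyz h
    · exact But y z x hy hz hx hyz (Ne.symm hxz) h
    · exact But z x y hz hx hy (Ne.symm hxz) hxy h
  -- interior lattice points are prime pairs
  have hPP : ∀ m n : ℤ, (((m:ℝ), (n:ℝ)) : ℝ × ℝ) ∈ interior K →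
      IsPrimeInt m ∧ IsPrimeInt n := by
    intro m n hz
    by_contra hnp
    have hzS : (((m:ℝ), (n:ℝ)) : ℝ × ℝ) ∈ S := by rw [hS]; exact ⟨m, n, rfl, hnp⟩
    have hzX : (((m:ℝ), (n:ℝ)) : ℝ × ℝ) ∈ (X : Set (ℝ × ℝ)) := by
      rw [← hempty]; exact ⟨interior_subset hz, hzS⟩
    exact extreme_not_interior (hvert _ hzX) hz
  -- midpoints
  have hmidpt : ∀ m n m' n' k l : ℤ, m + m' = 2 * k → n + n' = 2 * l →
      (((m:ℝ), (n:ℝ)) : ℝ × ℝ) ∈ interior K →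
      (((m':ℝ), (n':ℝ)) : ℝ × ℝ) ∈ interior K →
      (((k:ℝ), (l:ℝ)) : ℝ × ℝ) ∈ interior K := by
    intro m n m' n' k l hk hl hm hm'
    have h := hKconv.interior hm hm' (by norm_num : (0:ℝ) ≤ 1/2)
      (by norm_num : (0:ℝ) ≤ 1/2) (by norm_num)
    have he : ((1/2 : ℝ) • (((m:ℝ), (n:ℝ)) : ℝ × ℝ) + (1/2 : ℝ) • (((m':ℝ), (n':ℝ)) : ℝ × ℝ))
        = (((k:ℝ), (l:ℝ)) : ℝ × ℝ) := by
      have hkR : (m:ℝ) + (m':ℝ) = 2 * (k:ℝ) := by exact_mod_cast congrArg (Int.cast : ℤ → ℝ) hk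
      have hlR : (n:ℝ) + (n':ℝ) = 2 * (l:ℝ) := by exact_mod_cast congrArg (Int.cast : ℤ → ℝ) hl
      ext <;> simp <;> linarith
    rw [he] at h
    exact h
  -- descent lemma
  have descent : ∀ g : ℕ, ∀ m n m' n' : ℤ, (m' - m).natAbs = g →
      (((m:ℝ), (n:ℝ)) : ℝ × ℝ) ∈ interior K →
      (((m':ℝ), (n':ℝ)) : ℝ × ℝ) ∈ interior K →
      Odd m → Odd m' → (Odd n ↔ Odd n') → m = m' := by
    intro g
    induction g using Nat.strong_induction_on with
    | _ g ih =>
      intro m n m' n' hg hm hm' hom hom' hiff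
      by_contra hne
      have hpm := hPP m n hm
      have hpm' := hPP m' n' hm'
      obtain ⟨a, ha⟩ := hom
      obtain ⟨a', ha'⟩ := hom'
      have hom : Odd m := ⟨a, ha⟩
      have hom' : Odd m' := ⟨a', ha'⟩
      have hksum : m + m' = 2 * (a + a' + 1) := by omega
      have hlsum : ∃ l : ℤ, n + n' = 2 * l := by
        by_cases hon : Odd n
        · obtain ⟨b, hb⟩ := hon
          obtain ⟨b', hb'⟩ := hiff.mp ⟨b, hb⟩
          exact ⟨b + b' + 1, by omega⟩
        · have h2 : n = 2 := hpm.2.eq_two_of_not_odd hon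
          have h2' : n' = 2 := hpm'.2.eq_two_of_not_odd (fun h => hon (hiff.mpr h))
          exact ⟨2, by omega⟩
      obtain ⟨l, hl⟩ := hlsum
      set k : ℤ := a + a' + 1 with hkdef
      have hmid := hmidpt m n m' n' k l hksum hl hm hm'
      have hpk := hPP k l hmid
      have h3m : 3 ≤ m := hpm.1.three_le_of_odd hom
      have h3m' : 3 ≤ m' := hpm'.1.three_le_of_odd hom'
      have hok : Odd k := by
        by_contra ho
        have := hpk.1.eq_two_of_not_odd ho
        omega
      have hol : Odd n ↔ Odd l := by
        by_cases hon : Odd n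
        · have holl : Odd l := by
            by_contra hlo
            have hl2 := hpk.2.eq_two_of_not_odd hlo
            have h3n := hpm.2.three_le_of_odd hon
            have h3n' := hpm'.2.three_le_of_odd (hiff.mp hon)
            omega
          exact iff_of_true hon holl
        · have h2 : n = 2 := hpm.2.eq_two_of_not_odd hon
          have h2' : n' = 2 := hpm'.2.eq_two_of_not_odd (fun h => hon (hiff.mpr h))
          have hl2 : l = 2 := by omega
          refine iff_of_false hon ?_
          rw [hl2]; decide
      have hk2 : m' - m = 2 * (k - m) := by omega
      have hglt : (m - m).natAbs.succ ≤ g := by omega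
      have hlt : (k - m).natAbs < g := by omega
      have heq := ih _ hlt m n k l rfl hm hmid hom hok hol
      omega
  -- the three possible x-coordinates of interior lattice points
  obtain ⟨ca, hca⟩ : ∃ ca : ℤ, ∀ m n : ℤ, (((m:ℝ), (n:ℝ)) : ℝ × ℝ) ∈ interior K →
      Odd m → Odd n → m = ca := by
    by_cases hA : ∃ m n : ℤ, (((m:ℝ), (n:ℝ)) : ℝ × ℝ) ∈ interior K ∧ Odd m ∧ Odd n
    · obtain ⟨m0, n0, hm0, ho0, hon0⟩ := hA
      refine ⟨m0, fun m n hmn hom hon => ?_⟩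
      exact descent _ m n m0 n0 rfl hmn hm0 hom ho0 (iff_of_true hon hon0)
    · exact ⟨2, fun m n hmn hom hon => (hA ⟨m, n, hmn, hom, hon⟩).elim⟩
  obtain ⟨cb, hcb⟩ : ∃ cb : ℤ, ∀ m n : ℤ, (((m:ℝ), (n:ℝ)) : ℝ × ℝ) ∈ interior K →
      Odd m → ¬ Odd n → m = cb := by
    by_cases hA : ∃ m n : ℤ, (((m:ℝ), (n:ℝ)) : ℝ × ℝ) ∈ interior K ∧ Odd m ∧ ¬ Odd n
    · obtain ⟨m0, n0, hm0, ho0, hon0⟩ := hA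
      refine ⟨m0, fun m n hmn hom hon => ?_⟩
      exact descent _ m n m0 n0 rfl hmn hm0 hom ho0 (iff_of_false hon hon0)
    · exact ⟨2, fun m n hmn hom hon => (hA ⟨m, n, hmn, hom, hon⟩).elim⟩
  have hx3 : ∀ m n : ℤ, (((m:ℝ), (n:ℝ)) : ℝ × ℝ) ∈ interior K →
      ((m:ℝ) = ((2:ℤ):ℝ) ∨ (m:ℝ) = (ca:ℝ) ∨ (m:ℝ) = (cb:ℝ)) := by
    intro m n hmn
    by_cases hom : Odd m
    · by_cases hon : Odd n
      · right; left; exact_mod_cast hca m n hmn hom hon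
      · right; right; exact_mod_cast hcb m n hmn hom hon
    · left; exact_mod_cast (hPP m n hmn).1.eq_two_of_not_odd hom
  obtain ⟨r1, r2, r3, hr12, hr23, hrcov⟩ := sort3 ((2:ℤ):ℝ) (ca:ℝ) (cb:ℝ)
  have hx3' : ∀ m n : ℤ, (((m:ℝ), (n:ℝ)) : ℝ × ℝ) ∈ interior K →
      ((m:ℝ) = r1 ∨ (m:ℝ) = r2 ∨ (m:ℝ) = r3) := fun m n h => hrcov _ (hx3 m n h)
  -- bound on K
  obtain ⟨M, hM⟩ : ∃ M : ℝ, ∀ x ∈ K, |x.1| ≤ M ∧ |x.2| ≤ M := by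
    obtain ⟨C, hC⟩ := isBounded_iff_forall_norm_le.mp hKcomp.isBounded
    refine ⟨C, fun x hx => ⟨?_, ?_⟩⟩
    · simpa [Real.norm_eq_abs] using (norm_fst_le x).trans (hC x hx)
    · simpa [Real.norm_eq_abs] using (norm_snd_le x).trans (hC x hx)
  -- bound for points of X in a vertical slab with lattice-free interior
  have pieceBound : ∀ lo hi : ℝ,
      (∀ m n : ℤ, (((m:ℝ), (n:ℝ)) : ℝ × ℝ) ∈ interior K →
        ¬ (lo < (m:ℝ) ∧ (m:ℝ) < hi)) →
      (X.filter (fun x : ℝ × ℝ => lo ≤ x.1 ∧ x.1 ≤ hi)).card ≤ 6 := by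
    intro lo hi hfree
    set B : Set (ℝ × ℝ) := K ∩ {x : ℝ × ℝ | lo ≤ x.1 ∧ x.1 ≤ hi} with hBdef
    set T : Finset (ℝ × ℝ) := X.filter (fun x : ℝ × ℝ => lo ≤ x.1 ∧ x.1 ≤ hi) with hTdef
    have hTX : ∀ x ∈ T, x ∈ X := fun x hx => (Finset.mem_filter.mp hx).1
    have hTB : ∀ x ∈ T, x ∈ B := fun x hx =>
      ⟨hXK x (Finset.mem_filter.mp hx).1, (Finset.mem_filter.mp hx).2⟩
    have hTint : ∀ x ∈ T, ∃ m n : ℤ, x = (((m:ℝ), (n:ℝ)) : ℝ × ℝ) := by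
      intro x hx
      have := hXS (hTX x hx)
      rw [hS] at this
      obtain ⟨m, n, he, -⟩ := this
      exact ⟨m, n, he⟩
    have hBconv : Convex ℝ B := by
      refine hKconv.inter ?_
      intro x hx y hy a b ha hb hab
      have h3 : a * lo + b * lo = lo := by rw [← add_mul, hab, one_mul]
      have h4 : a * hi + b * hi = hi := by rw [← add_mul, hab, one_mul]
      constructor
      · have he : (a • x + b • y).1 = a * x.1 + b * y.1 := rfl
        rw [he]
        nlinarith [mul_nonneg ha (sub_nonneg.mpr hx.1), mul_nonneg hb (sub_nonneg.mpr hy.1)]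
      · have he : (a • x + b • y).1 = a * x.1 + b * y.1 := rfl
        rw [he]
        nlinarith [mul_nonneg ha (sub_nonneg.mpr hx.2), mul_nonneg hb (sub_nonneg.mpr hy.2)]
    have hBcomp : IsCompact B := hKcomp.inter_right
      ((isClosed_le continuous_const continuous_fst).inter
        (isClosed_le continuous_fst continuous_const))
    have hBlat : ∀ z : ℤ × ℤ, (((z.1:ℝ), (z.2:ℝ)) : ℝ × ℝ) ∉ interior B := by
      rintro ⟨m, n⟩ hz
      have hzK : (((m:ℝ), (n:ℝ)) : ℝ × ℝ) ∈ interior K :=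
        interior_mono Set.inter_subset_left hz
      obtain ⟨ε, hε, h1, h2⟩ := shift_mem hz
      have hlo : lo ≤ (m:ℝ) - ε := by
        have := h2.2.1
        simpa using this
      have hhi : (m:ℝ) + ε ≤ hi := by
        have := h1.2.2
        simpa using this
      exact hfree m n hzK ⟨by linarith, by linarith⟩
    by_cases hint : (interior B).Nonempty
    · -- use flatness
      obtain ⟨v, hv, hL⟩ := flatness B hBconv hBcomp hint hBlat
      have hvR : ¬ ((v.1:ℝ) = 0 ∧ (v.2:ℝ) = 0) := by
        rintro ⟨h1, h2⟩
        exact hv (Prod.ext (by exact_mod_cast h1) (by exact_mod_cast h2))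
      set f : ℝ × ℝ → ℤ := fun x => ⌊x.1⌋ * v.1 + ⌊x.2⌋ * v.2 with hfdef
      have hline : ∀ x ∈ T, x.1 * (v.1:ℝ) + x.2 * (v.2:ℝ) = ((f x : ℤ) : ℝ) := by
        intro x hx
        obtain ⟨m, n, he⟩ := hTint x hx
        subst he
        show (m:ℝ) * (v.1:ℝ) + (n:ℝ) * (v.2:ℝ) = _
        rw [hfdef]
        simp only [Int.floor_intCast]
        push_cast
        ring
      have hmemL : ∀ x ∈ T, f x ∈ latticeLinesMeeting v B := by
        intro x hx
        exact ⟨⟨(⌊x.1⌋, ⌊x.2⌋), rfl⟩, x, hTB x hx, hline x hx⟩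
      have hfin : (latticeLinesMeeting v B).Finite := by
        set C : ℝ := M * |(v.1:ℝ)| + M * |(v.2:ℝ)| with hCdef
        apply Set.Finite.subset (Set.finite_Icc (-⌈C⌉) ⌈C⌉)
        rintro c ⟨-, x, hxB, hxc⟩
        have hx1 : |x.1| ≤ M := (hM x hxB.1).1
        have hx2 : |x.2| ≤ M := (hM x hxB.1).2
        have hCb : |(c:ℝ)| ≤ C := by
          rw [← hxc, hCdef]
          calc |x.1 * (v.1:ℝ) + x.2 * (v.2:ℝ)| ≤ |x.1 * (v.1:ℝ)| + |x.2 * (v.2:ℝ)| :=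
                abs_add_le _ _
            _ = |x.1| * |(v.1:ℝ)| + |x.2| * |(v.2:ℝ)| := by rw [abs_mul, abs_mul]
            _ ≤ M * |(v.1:ℝ)| + M * |(v.2:ℝ)| := by
                have h1 := mul_le_mul_of_nonneg_right hx1 (abs_nonneg ((v.1:ℝ)))
                have h2 := mul_le_mul_of_nonneg_right hx2 (abs_nonneg ((v.2:ℝ)))
                linarith
        have hcle : (c:ℝ) ≤ (⌈C⌉ : ℝ) := le_trans (le_trans (le_abs_self _) hCb) (Int.le_ceil C)
        have hcge : ((-⌈C⌉ : ℤ) : ℝ) ≤ (c:ℝ) := by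
          push_cast
          have := (abs_le.mp hCb).1
          have := Int.le_ceil C
          linarith
        rw [Set.mem_Icc]
        exact ⟨by exact_mod_cast hcge, by exact_mod_cast hcle⟩
      have himg : (T.image f).card ≤ 3 := by
        have hsub : ((T.image f : Finset ℤ) : Set ℤ) ⊆ latticeLinesMeeting v B := by
          intro c hc
          rw [Finset.coe_image] at hc
          obtain ⟨x, hx, rfl⟩ := hc
          exact hmemL x hx
        calc (T.image f).card = ((T.image f : Finset ℤ) : Set ℤ).ncard :=
              (Set.ncard_coe_finset _).symm
          _ ≤ (latticeLinesMeeting v B).ncard := Set.ncard_le_ncard hsub hfin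
          _ ≤ 3 := hL
      have hfib : ∀ c ∈ T.image f, (T.filter (fun x => f x = c)).card ≤ 2 := by
        intro c hc
        by_contra hgt
        push_neg at hgt
        obtain ⟨x, hx, y, hy, z, hz, hxy, hxz, hyz⟩ := three_distinct hgt
        have hxT := Finset.mem_filter.mp hx
        have hyT := Finset.mem_filter.mp hy
        have hzT := Finset.mem_filter.mp hz
        have lx : x.1 * (v.1:ℝ) + x.2 * (v.2:ℝ) = ((c:ℤ):ℝ) := by
          rw [← hxT.2]; exact hline x hxT.1
        have ly : y.1 * (v.1:ℝ) + y.2 * (v.2:ℝ) = ((c:ℤ):ℝ) := by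
          rw [← hyT.2]; exact hline y hyT.1
        have lz : z.1 * (v.1:ℝ) + z.2 * (v.2:ℝ) = ((c:ℤ):ℝ) := by
          rw [← hzT.2]; exact hline z hzT.1
        exact no_three x (hTX x hxT.1) y (hTX y hyT.1) z (hTX z hzT.1) hxy hxz hyz
          (collinear_of_line hvR lx ly lz)
      calc T.card ≤ 2 * (T.image f).card := Finset.card_le_mul_card_image T 2 hfib
        _ ≤ 2 * 3 := by omega
        _ = 6 := rfl
    · -- interior of B is empty: at most 2 points
      have hT2 : T.card ≤ 2 := by
        by_contra hgt
        push_neg at hgt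
        obtain ⟨x, hx, y, hy, z, hz, hxy, hxz, hyz⟩ := three_distinct hgt
        by_cases hcol : Collinear ℝ ({x, y, z} : Set (ℝ × ℝ))
        · exact no_three x (hTX x hx) y (hTX y hy) z (hTX z hz) hxy hxz hyz hcol
        · have hhull : convexHull ℝ ({x, y, z} : Set (ℝ × ℝ)) ⊆ B := by
            apply convexHull_min _ hBconv
            intro p hp
            rcases hp with rfl | rfl | rfl
            · exact hTB _ hx
            · exact hTB _ hy
            · exact hTB _ hz
          obtain ⟨p, hp⟩ := triangle_interior_nonempty hcol
          exact hint ⟨p, interior_mono hhull hp⟩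
      omega
  -- assemble
  set lo0 : ℝ := min (-M) r1 with hlo0
  set hi3 : ℝ := max M r3 with hhi3
  have h1 := pieceBound lo0 r1 (by
    rintro m n hmn ⟨hgt, hlt⟩
    rcases hx3' m n hmn with h | h | h <;> linarith)
  have h2 := pieceBound r1 r2 (by
    rintro m n hmn ⟨hgt, hlt⟩
    rcases hx3' m n hmn with h | h | h <;> linarith)
  have h3 := pieceBound r2 r3 (by
    rintro m n hmn ⟨hgt, hlt⟩
    rcases hx3' m n hmn with h | h | h <;> linarith)
  have h4 := pieceBound r3 hi3 (by
    rintro m n hmn ⟨hgt, hlt⟩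
    have hle : r3 ≤ hi3 := le_max_right _ _
    rcases hx3' m n hmn with h | h | h <;> linarith)
  set A1 := X.filter (fun x : ℝ × ℝ => lo0 ≤ x.1 ∧ x.1 ≤ r1) with hA1
  set A2 := X.filter (fun x : ℝ × ℝ => r1 ≤ x.1 ∧ x.1 ≤ r2) with hA2
  set A3 := X.filter (fun x : ℝ × ℝ => r2 ≤ x.1 ∧ x.1 ≤ r3) with hA3
  set A4 := X.filter (fun x : ℝ × ℝ => r3 ≤ x.1 ∧ x.1 ≤ hi3) with hA4
  have hsub : X ⊆ A1 ∪ A2 ∪ A3 ∪ A4 := by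
    intro x hx
    have hb := hM x (hXK x hx)
    have hbl : -M ≤ x.1 := (abs_le.mp hb.1).1
    have hbu : x.1 ≤ M := (abs_le.mp hb.1).2
    simp only [Finset.mem_union, hA1, hA2, hA3, hA4, Finset.mem_filter]
    rcases le_total x.1 r1 with hc1 | hc1
    · exact Or.inl (Or.inl (Or.inl ⟨hx, le_trans (min_le_left _ _) hbl, hc1⟩))
    rcases le_total x.1 r2 with hc2 | hc2
    · exact Or.inl (Or.inl (Or.inr ⟨hx, hc1, hc2⟩))
    rcases le_total x.1 r3 with hc3 | hc3
    · exact Or.inl (Or.inr ⟨hx, hc2, hc3⟩)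
    · exact Or.inr ⟨hx, hc3, le_trans hbu (le_max_left _ _)⟩
  have hcard : X.card ≤ A1.card + A2.card + A3.card + A4.card := by
    calc X.card ≤ (A1 ∪ A2 ∪ A3 ∪ A4).card := Finset.card_le_card hsub
      _ ≤ (A1 ∪ A2 ∪ A3).card + A4.card := Finset.card_union_le _ _
      _ ≤ ((A1 ∪ A2).card + A3.card) + A4.card := by
          have := Finset.card_union_le (A1 ∪ A2) A3; omega
      _ ≤ ((A1.card + A2.card) + A3.card) + A4.card := by
          have := Finset.card_union_le A1 A2; omega
      _ = A1.card + A2.card + A3.card + A4.card := by ring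
  omega
end
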